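/- arXiv:0712.4106 — 3 statements merged into one kernel-verified Lean document; each statement's English description precedes it below -/
import Mathlib

section
/- Let η : ℤ → ℝ satisfy η(x+2) − (2 + r₁⁽¹⁾) η(x+1) + η(x) = r₋₁⁽²⁾ for all x, with η(0) = 0, and define η(−1) := r₋₁⁽²⁾ − η(1). For each of the five cases η(x) = x; η(x) = ε' x(x+d); η(x) = 1 − q^x; η(x) = q^{−x} − 1; η(x) = ε'(q^{−x}−1)(1−dq^x), the identity −(η(x+1) − η(x))(η(x−1) − η(x)) = r₁⁽¹⁾ η(x)² + 2 r₋₁⁽²⁾ η(x) − η(1) η(−1) holds for all x, where r₁⁽¹⁾ and r₋₁⁽²⁾ are the corresponding constants (0, 0; 0, 2ε'; (q^{−1/2}−q^{1/2})², −(q^{−1/2}−q^{1/2})²; (q^{−1/2}−q^{1/2})², (q^{−1/2}−q^{1/2})²; (q^{−1/2}−q^{1/2})², (q^{−1/2}−q^{1/2})² ε'(1+d)). -/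
/-!
If `η` solves the inhomogeneous recurrence `η (x + 1) - (2 + r) η x + η (x - 1) = s`, then
`-(η (x + 1) - η x) (η (x - 1) - η x) - r η x ^ 2 - 2 s η x` is a first integral: eliminating
`η (x - 1)` turns it into the symmetric form `a ^ 2 + b ^ 2 - (2 + r) a b - s (a + b)` of
`a = η x`, `b = η (x + 1)`, so it does not change under `x ↦ x + 1`. Evaluating it at `x = 0`,
where `η 0 = 0`, gives `-η 1 η (-1)`. Each of the five `η` satisfies such a recurrence, since
`q ^ x` and `q ^ (-x)` are both annihilated by `u (x + 1) - (q + q⁻¹) u x + u (x - 1)` and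
`q + q⁻¹ = 2 + (q ^ (-1/2) - q ^ (1/2)) ^ 2`.
-/

section Recurrence

variable {R : Type*} [CommRing R] {η : ℤ → R} {r s : R}

theorem neg_mul_sub_eq_of_recurrence
    (h : ∀ x, η (x + 1) - (2 + r) * η x + η (x - 1) = s) (h0 : η 0 = 0) (x : ℤ) :
    -((η (x + 1) - η x) * (η (x - 1) - η x)) =
      r * η x ^ 2 + 2 * s * η x - η 1 * η (-1) := by
  set Q : ℤ → R := fun x ↦
    -((η (x + 1) - η x) * (η (x - 1) - η x)) - r * η x ^ 2 - 2 * s * η x with hQ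
  have hQ_periodic : Function.Periodic Q 1 := fun x ↦ by
    have hx1 := h (x + 1)
    rw [add_sub_cancel_right] at hx1
    simp only [hQ, add_sub_cancel_right]
    linear_combination (η (x + 1) - η x) * (hx1 + h x)
  have hQx : Q x = Q 0 := by simpa using hQ_periodic.int_mul_eq x
  have hQ0 : Q 0 = -(η 1 * η (-1)) := by simp [hQ, h0]
  linear_combination hQx + hQ0

end Recurrence

theorem zpow_add_one_sub_add_zpow_sub_one {K : Type*} [Field K] {q : K} (hq : q ≠ 0) (x : ℤ) :
    q ^ (x + 1) - (q + q⁻¹) * q ^ x + q ^ (x - 1) = 0 := by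
  rw [zpow_add_one₀ hq, zpow_sub_one₀ hq]
  ring

theorem inv_sqrt_sub_sqrt_sq {q : ℝ} (hq : 0 < q) :
    ((Real.sqrt q)⁻¹ - Real.sqrt q) ^ 2 = q + q⁻¹ - 2 := by
  have hs : Real.sqrt q ≠ 0 := by positivity
  rw [sub_sq, inv_pow, Real.sq_sqrt hq.le, mul_assoc, inv_mul_cancel₀ hs]
  ring

theorem stmt_6_general (q d ε' : ℝ) (hq : 0 < q) :
    (∀ η : ℤ → ℝ, (∀ x : ℤ, η x = (x : ℝ)) →
      ∀ x : ℤ, -((η (x + 1) - η x) * (η (x - 1) - η x)) =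
        0 * η x ^ 2 + 2 * 0 * η x - η 1 * η (-1)) ∧
    (∀ η : ℤ → ℝ, (∀ x : ℤ, η x = ε' * (x : ℝ) * ((x : ℝ) + d)) →
      ∀ x : ℤ, -((η (x + 1) - η x) * (η (x - 1) - η x)) =
        0 * η x ^ 2 + 2 * (2 * ε') * η x - η 1 * η (-1)) ∧
    (∀ η : ℤ → ℝ, (∀ x : ℤ, η x = 1 - q ^ x) →
      ∀ x : ℤ, -((η (x + 1) - η x) * (η (x - 1) - η x)) =
        ((Real.sqrt q)⁻¹ - Real.sqrt q) ^ 2 * η x ^ 2 +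
        2 * (-((Real.sqrt q)⁻¹ - Real.sqrt q) ^ 2) * η x - η 1 * η (-1)) ∧
    (∀ η : ℤ → ℝ, (∀ x : ℤ, η x = q ^ (-x) - 1) →
      ∀ x : ℤ, -((η (x + 1) - η x) * (η (x - 1) - η x)) =
        ((Real.sqrt q)⁻¹ - Real.sqrt q) ^ 2 * η x ^ 2 +
        2 * ((Real.sqrt q)⁻¹ - Real.sqrt q) ^ 2 * η x - η 1 * η (-1)) ∧
    (∀ η : ℤ → ℝ, (∀ x : ℤ, η x = ε' * (q ^ (-x) - 1) * (1 - d * q ^ x)) →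
      ∀ x : ℤ, -((η (x + 1) - η x) * (η (x - 1) - η x)) =
        ((Real.sqrt q)⁻¹ - Real.sqrt q) ^ 2 * η x ^ 2 +
        2 * (((Real.sqrt q)⁻¹ - Real.sqrt q) ^ 2 * ε' * (1 + d)) * η x -
        η 1 * η (-1)) := by
  have hq0 : q ≠ 0 := hq.ne'
  have hgeom := zpow_add_one_sub_add_zpow_sub_one hq0
  have hgeom_inv := zpow_add_one_sub_add_zpow_sub_one (inv_ne_zero hq0)
  rw [inv_inv, add_comm] at hgeom_inv
  have hzpow_neg (x : ℤ) : q ^ (-x) = q⁻¹ ^ x := (inv_zpow' q x).symm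
  have hprod (x : ℤ) : q⁻¹ ^ x * q ^ x = 1 := by
    rw [← mul_zpow, inv_mul_cancel₀ hq0, one_zpow]
  refine ⟨?_, ?_, ?_, ?_, ?_⟩ <;> intro η hη <;> apply neg_mul_sub_eq_of_recurrence <;>
    simp only [hη, hzpow_neg, inv_sqrt_sub_sqrt_sq hq]
  · intro x; push_cast; ring
  · simp
  · intro x; push_cast; ring
  · simp
  · intro x; linear_combination -hgeom x
  · simp
  · intro x; linear_combination hgeom_inv x
  · simp
  · intro x
    linear_combination ε' * (hgeom_inv x + d * hgeom x) -
      ε' * d * (hprod (x + 1) - (q + q⁻¹) * hprod x + hprod (x - 1))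
  · simp

theorem stmt_6 (q d ε' : ℝ) (hq : 0 < q) (hq1 : q < 1) (hε : ε' = 1 ∨ ε' = -1) :
    (∀ η : ℤ → ℝ, (∀ x : ℤ, η x = (x : ℝ)) →
      ∀ x : ℤ, -((η (x + 1) - η x) * (η (x - 1) - η x)) =
        0 * η x ^ 2 + 2 * 0 * η x - η 1 * η (-1)) ∧
    (∀ η : ℤ → ℝ, (∀ x : ℤ, η x = ε' * (x : ℝ) * ((x : ℝ) + d)) →
      ∀ x : ℤ, -((η (x + 1) - η x) * (η (x - 1) - η x)) =
        0 * η x ^ 2 + 2 * (2 * ε') * η x - η 1 * η (-1)) ∧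
    (∀ η : ℤ → ℝ, (∀ x : ℤ, η x = 1 - q ^ x) →
      ∀ x : ℤ, -((η (x + 1) - η x) * (η (x - 1) - η x)) =
        ((Real.sqrt q)⁻¹ - Real.sqrt q) ^ 2 * η x ^ 2 +
        2 * (-((Real.sqrt q)⁻¹ - Real.sqrt q) ^ 2) * η x - η 1 * η (-1)) ∧
    (∀ η : ℤ → ℝ, (∀ x : ℤ, η x = q ^ (-x) - 1) →
      ∀ x : ℤ, -((η (x + 1) - η x) * (η (x - 1) - η x)) =
        ((Real.sqrt q)⁻¹ - Real.sqrt q) ^ 2 * η x ^ 2 +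
        2 * ((Real.sqrt q)⁻¹ - Real.sqrt q) ^ 2 * η x - η 1 * η (-1)) ∧
    (∀ η : ℤ → ℝ, (∀ x : ℤ, η x = ε' * (q ^ (-x) - 1) * (1 - d * q ^ x)) →
      ∀ x : ℤ, -((η (x + 1) - η x) * (η (x - 1) - η x)) =
        ((Real.sqrt q)⁻¹ - Real.sqrt q) ^ 2 * η x ^ 2 +
        2 * (((Real.sqrt q)⁻¹ - Real.sqrt q) ^ 2 * ε' * (1 + d)) * η x -
        η 1 * η (-1)) :=
  stmt_6_general q d ε' hq
end

section
/- Let B(x) = p(N − x) and D(x) = (1 − p)x with 0 < p < 1 (Krawtchouk case), and define the operator H̃ on functions f : {0,…,N} → ℝ by (H̃f)(x) = B(x)(f(x) − f(x+1)) + D(x)(f(x) − f(x−1)). Then for each n with 0 ≤ n ≤ N, the Krawtchouk polynomial P_n(x) = ₂F₁(−n, −x; −N; 1/p) (a terminating hypergeometric sum) satisfies H̃ P_n = n P_n. -/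
/-!
Write `P_n(x) = F(-x)` with `F(a) = ∑_{k ≤ n} c_k (a)_k`, a series in rising factorials whose
coefficients obey `c_{k+1} (k+1) p (N - k) = (n - k) c_k`. Since `(a)_{k+1} - (a-1)_{k+1} = (k+1) (a)_k`,
both differences in `H̃` are again rising-factorial series, and the coefficient recurrence turns
`H̃ F` into `∑_{k<n} ((n-k) c_k (a)_k + (k+1) c_{k+1} (a)_{k+1}) = n F(a)`, for every real `a`.
-/

open Finset


/-- The Pochhammer symbol `(a)_k = a(a+1)⋯(a+k-1)` for real `a`. -/
noncomputable def poch (a : ℝ) (k : ℕ) : ℝ := ∏ j ∈ Finset.range k, (a + j)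

/-- The Krawtchouk polynomial `P_n(x) = ₂F₁(-n, -x; -N; 1/p)` (terminating sum),
normalised so that `P_n(0) = 1`. -/
noncomputable def krawtchouk (p : ℝ) (N n x : ℕ) : ℝ :=
  ∑ k ∈ Finset.range (n + 1),
    poch (-(n : ℝ)) k * poch (-(x : ℝ)) k /
      (poch (-(N : ℝ)) k * (Nat.factorial k)) * (1 / p) ^ k

section Pochhammer

@[simp]
lemma poch_zero (a : ℝ) : poch a 0 = 1 := by simp [poch]

lemma poch_succ (a : ℝ) (k : ℕ) : poch a (k + 1) = poch a k * (a + k) := by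
  simp [poch, prod_range_succ]

lemma poch_succ' (a : ℝ) (k : ℕ) : poch a (k + 1) = a * poch (a + 1) k := by
  rw [poch, prod_range_succ', poch, mul_comm]
  congr 1
  · simp
  · exact prod_congr rfl fun j _ => by push_cast; ring

lemma poch_succ_sub_poch_sub_one_succ (a : ℝ) (k : ℕ) :
    poch a (k + 1) - poch (a - 1) (k + 1) = (k + 1) * poch a k := by
  rw [poch_succ, poch_succ', sub_add_cancel]
  ring

lemma poch_neg_natCast_ne_zero {N k : ℕ} (hk : k ≤ N) : poch (-(N : ℝ)) k ≠ 0 := by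
  refine prod_ne_zero_iff.mpr fun j hj => ?_
  have : (j : ℝ) < N := by exact_mod_cast (mem_range.mp hj).trans_le hk
  linarith

end Pochhammer

section PochSeries

noncomputable def pochSeries (c : ℕ → ℝ) (n : ℕ) (a : ℝ) : ℝ :=
  ∑ k ∈ range (n + 1), c k * poch a k

lemma pochSeries_sub_pochSeries_sub_one (c : ℕ → ℝ) (n : ℕ) (a : ℝ) :
    pochSeries c n a - pochSeries c n (a - 1) =
      ∑ k ∈ range n, c (k + 1) * (k + 1) * poch a k := by
  rw [pochSeries, pochSeries, ← sum_sub_distrib, sum_range_succ']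
  simp only [poch_zero, sub_self, add_zero, ← mul_sub, poch_succ_sub_poch_sub_one_succ, mul_assoc]

lemma sum_range_sub_mul_add_succ_mul (f : ℕ → ℝ) (n : ℕ) :
    ∑ k ∈ range n, ((n - k) * f k + (k + 1) * f (k + 1)) = n * ∑ k ∈ range (n + 1), f k := by
  have hlow : ∑ k ∈ range n, ((n : ℝ) - k) * f k = ∑ k ∈ range (n + 1), ((n : ℝ) - k) * f k := by
    simp [sum_range_succ]
  have hhigh : ∑ k ∈ range n, ((k : ℝ) + 1) * f (k + 1) = ∑ k ∈ range (n + 1), (k : ℝ) * f k := by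
    simp [sum_range_succ']
  rw [sum_add_distrib, hlow, hhigh, ← sum_add_distrib, mul_sum]
  exact sum_congr rfl fun k _ => by ring

end PochSeries

section Krawtchouk

noncomputable def krawtchoukCoeff (p : ℝ) (N n k : ℕ) : ℝ :=
  poch (-(n : ℝ)) k / (poch (-(N : ℝ)) k * k.factorial) * (1 / p) ^ k

lemma krawtchoukCoeff_succ_mul {p : ℝ} (hp : p ≠ 0) {N k : ℕ} (hk : k < N) (n : ℕ) :
    krawtchoukCoeff p N n (k + 1) * (k + 1) * (p * (N - k)) = (n - k) * krawtchoukCoeff p N n k := by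
  have hpoch : poch (-(N : ℝ)) k ≠ 0 := poch_neg_natCast_ne_zero hk.le
  have hNk : (N : ℝ) - k ≠ 0 := sub_ne_zero.mpr (by exact_mod_cast hk.ne')
  have hfac : (k.factorial : ℝ) ≠ 0 := by exact_mod_cast k.factorial_ne_zero
  rw [krawtchoukCoeff, krawtchoukCoeff, poch_succ, poch_succ, Nat.factorial_succ, pow_succ,
    show -(N : ℝ) + k = -(N - k) by ring]
  push_cast
  field_simp
  ring

noncomputable def krawtchoukSeries (p : ℝ) (N n : ℕ) : ℝ → ℝ :=
  pochSeries (krawtchoukCoeff p N n) n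

lemma krawtchouk_eq_krawtchoukSeries (p : ℝ) (N n x : ℕ) :
    krawtchouk p N n x = krawtchoukSeries p N n (-(x : ℝ)) :=
  sum_congr rfl fun k _ => by rw [krawtchoukCoeff]; ring

lemma krawtchoukSeries_eigen {p : ℝ} (hp : p ≠ 0) {N n : ℕ} (hn : n ≤ N) (a : ℝ) :
    p * (N + a) * (krawtchoukSeries p N n a - krawtchoukSeries p N n (a - 1)) +
      (1 - p) * (-a) * (krawtchoukSeries p N n a - krawtchoukSeries p N n (a + 1)) =
      n * krawtchoukSeries p N n a := by
  have hup : krawtchoukSeries p N n a - krawtchoukSeries p N n (a + 1) =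
      -(krawtchoukSeries p N n (a + 1) - krawtchoukSeries p N n (a + 1 - 1)) := by
    rw [add_sub_cancel_right]; ring
  rw [hup]
  simp only [krawtchoukSeries, pochSeries_sub_pochSeries_sub_one]
  rw [pochSeries, ← sum_range_sub_mul_add_succ_mul, mul_sum, mul_neg, mul_sum, ← sum_neg_distrib,
    ← sum_add_distrib]
  refine sum_congr rfl fun k hk => ?_
  have hcoeff := krawtchoukCoeff_succ_mul hp ((mem_range.mp hk).trans_le hn) n
  linear_combination poch a k * hcoeff
    - ((1 - p) * (k + 1) * krawtchoukCoeff p N n (k + 1)) * poch_succ' a k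
    - (p * (k + 1) * krawtchoukCoeff p N n (k + 1)) * poch_succ a k

end Krawtchouk

theorem stmt_7_general (p : ℝ) (hp : 0 < p) (N n : ℕ) (hn : n ≤ N) :
    ∀ x : ℕ, x ≤ N →
      p * ((N : ℝ) - (x : ℝ)) * (krawtchouk p N n x - krawtchouk p N n (x + 1)) +
      (1 - p) * (x : ℝ) * (krawtchouk p N n x - krawtchouk p N n (x - 1)) =
      (n : ℝ) * krawtchouk p N n x := by
  intro x _
  have heigen := krawtchoukSeries_eigen hp.ne' hn (-(x : ℝ))
  have hsucc : krawtchouk p N n (x + 1) = krawtchoukSeries p N n (-(x : ℝ) - 1) := by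
    rw [krawtchouk_eq_krawtchoukSeries]; push_cast; ring_nf
  -- at `x = 0` the factor `x` kills the term `krawtchouk p N n (0 - 1)`, whatever its value
  have hpred : (x : ℝ) * (krawtchouk p N n x - krawtchouk p N n (x - 1)) =
      x * (krawtchoukSeries p N n (-(x : ℝ)) - krawtchoukSeries p N n (-(x : ℝ) + 1)) := by
    rcases x with _ | x
    · simp
    · rw [krawtchouk_eq_krawtchoukSeries, krawtchouk_eq_krawtchoukSeries]; push_cast; ring_nf
  simp only [krawtchouk_eq_krawtchoukSeries p N n x] at hpred ⊢
  linear_combination heigen + (1 - p) * hpred - p * (N - x) * hsucc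

theorem stmt_7 (p : ℝ) (hp : 0 < p) (hp1 : p < 1) (N n : ℕ) (hn : n ≤ N) :
    ∀ x : ℕ, x ≤ N →
      p * ((N : ℝ) - (x : ℝ)) * (krawtchouk p N n x - krawtchouk p N n (x + 1)) +
      (1 - p) * (x : ℝ) * (krawtchouk p N n x - krawtchouk p N n (x - 1)) =
      (n : ℝ) * krawtchouk p N n x :=
  stmt_7_general p hp N n hn
end

section
/- Let η : ℕ → ℝ be strictly increasing with η(0) = 0, satisfying η(x+2) − (2+r₁⁽¹⁾)η(x+1) + η(x) = r₋₁⁽²⁾, and let a : ℕ → ℝ satisfy, for all x ≥ 0, (η(x+2) − η(x+1)) a(x+1) + (η(x−1) − η(x)) a(x) = −(η(x+1) + η(x)) r₁⁽⁰⁾ − r₋₁⁽¹⁾ (with η(−1) := r₋₁⁽²⁾ − η(1)) and a(0) = B₀. Then for all x ≥ 0, (η(x+1) − η(x))(η(x−1) − η(x)) a(x) = r₁⁽⁰⁾ η(x)² + r₋₁⁽¹⁾ η(x) + η(1) η(−1) B₀. -/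
/-!
Multiplying the recurrence for `a` at `x` by `η x - η (x + 1)` turns it into
`P (x + 1) - P x = f (η (x + 1)) - f (η x)`, where `P x` is the left-hand side of the claim and
`f t = r₁⁽⁰⁾ t² + r₋₁⁽¹⁾ t`. Hence `P x - f (η x)` is constant, and at `x = 0` it equals
`η 1 * η (-1) * B₀` because `η 0 = 0`.
-/

theorem sub_zero_eq_sub_zero_of_sub_succ_eq {G : Type*} [AddCommGroup G] {u v : ℕ → G}
    (h : ∀ n, u (n + 1) - u n = v (n + 1) - v n) (n : ℕ) : u n - u 0 = v n - v 0 := by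
  rw [← Finset.sum_range_sub, ← Finset.sum_range_sub]
  exact Finset.sum_congr rfl fun i _ => h i

theorem stmt_19_general (r10 rm11 B0 : ℝ) (η : ℤ → ℝ) (a : ℕ → ℝ)
    (hη0 : η 0 = 0)
    (ha0 : a 0 = B0)
    (harec : ∀ x : ℕ,
      (η ((x : ℤ) + 2) - η ((x : ℤ) + 1)) * a (x + 1) +
        (η ((x : ℤ) - 1) - η (x : ℤ)) * a x =
      -(η ((x : ℤ) + 1) + η (x : ℤ)) * r10 - rm11) :
    ∀ x : ℕ,
      (η ((x : ℤ) + 1) - η (x : ℤ)) * (η ((x : ℤ) - 1) - η (x : ℤ)) * a x =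
        r10 * η (x : ℤ) ^ 2 + rm11 * η (x : ℤ) + η 1 * η (-1) * B0 := by
  set P : ℕ → ℝ := fun x => (η ((x : ℤ) + 1) - η x) * (η ((x : ℤ) - 1) - η x) * a x
  set f : ℕ → ℝ := fun x => r10 * η x ^ 2 + rm11 * η x
  have hstep : ∀ x : ℕ, P (x + 1) - P x = f (x + 1) - f x := by
    intro x
    simp only [P, f, Nat.cast_succ, add_sub_cancel_right, add_assoc, one_add_one_eq_two]
    linear_combination (η x - η ((x : ℤ) + 1)) * harec x
  intro x
  have hconst := sub_zero_eq_sub_zero_of_sub_succ_eq hstep x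
  simp only [P, f, Nat.cast_zero, zero_add, zero_sub, hη0, ha0] at hconst
  linear_combination hconst

theorem stmt_19 (r1 rm2 r10 rm11 B0 : ℝ) (η : ℤ → ℝ) (a : ℕ → ℝ)
    (hη0 : η 0 = 0)
    (hmono : ∀ x : ℤ, 0 ≤ x → η x < η (x + 1))
    (hηrec : ∀ x : ℤ, 0 ≤ x → η (x + 2) - (2 + r1) * η (x + 1) + η x = rm2)
    (hηm1 : η (-1) = rm2 - η 1)
    (ha0 : a 0 = B0)
    (harec : ∀ x : ℕ,
      (η ((x : ℤ) + 2) - η ((x : ℤ) + 1)) * a (x + 1) +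
        (η ((x : ℤ) - 1) - η (x : ℤ)) * a x =
      -(η ((x : ℤ) + 1) + η (x : ℤ)) * r10 - rm11) :
    ∀ x : ℕ,
      (η ((x : ℤ) + 1) - η (x : ℤ)) * (η ((x : ℤ) - 1) - η (x : ℤ)) * a x =
        r10 * η (x : ℤ) ^ 2 + rm11 * η (x : ℤ) + η 1 * η (-1) * B0 :=
  stmt_19_general r10 rm11 B0 η a hη0 ha0 harec
end
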